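/- Let F = ⟨a,b⟩ be the free group of rank 2. There exists a subset S of F that is closed in the profinite topology of F such that the product S⟨b⟩ of S with the cyclic subgroup generated by b is not closed in the profinite topology of F. -/

import Mathlib

/-!
Let `S` be the set of words whose exponent sums in `a` and `b` are `i !` and `(4 ^ i - 1) / 3` for
some `i`. Every finite-index subgroup `N` contains `a ^ [F : N]!`, which lies in `S⟨b⟩`, so `1` is in
the closure of `S⟨b⟩` but not in `S⟨b⟩`. On the other hand `S` is closed: a point `x ∉ S` is separated
from the finitely many pieces of `S` with `i < L` by exponent sums modulo suitable integers, and from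
the pieces with `i ≥ L` by its `b`-exponent sum modulo `4 ^ L`, because `(4 ^ i - 1) / 3` converges
`4`-adically to `-1/3`, which is not an integer.
-/

open scoped Pointwise

/-- A subset `C` of a group is closed in the profinite topology iff every point
outside `C` is separated from `C` by a coset of a finite-index normal subgroup. -/
def IsPTClosed {G : Type*} [Group G] (C : Set G) : Prop :=
  ∀ x : G, x ∉ C → ∃ N : Subgroup G, N.Normal ∧ N.FiniteIndex ∧
    (x • (N : Set G)) ∩ C = ∅

open scoped Nat

section Separation

variable {G : Type*} [Group G]

def IsPTSeparated (x : G) (C : Set G) : Prop :=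
  ∃ N : Subgroup G, N.Normal ∧ N.FiniteIndex ∧ ∀ c ∈ C, x⁻¹ * c ∉ N

theorem isPTClosed_iff_forall_isPTSeparated {C : Set G} :
    IsPTClosed C ↔ ∀ x ∉ C, IsPTSeparated x C := by
  refine forall₂_congr fun x _ => exists_congr fun N => and_congr_right' <| and_congr_right' ?_
  simp only [Set.eq_empty_iff_forall_notMem, Set.mem_inter_iff, mem_leftCoset_iff,
    SetLike.mem_coe, not_and']

variable {x : G} {C D : Set G}

theorem IsPTSeparated.mono (h : IsPTSeparated x D) (hCD : C ⊆ D) : IsPTSeparated x C :=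
  let ⟨N, hN, hNf, hD⟩ := h
  ⟨N, hN, hNf, fun c hc => hD c (hCD hc)⟩

theorem isPTSeparated_empty (x : G) : IsPTSeparated x ∅ :=
  ⟨⊤, inferInstance, inferInstance, fun _ hc => hc.elim⟩

theorem IsPTSeparated.union (hC : IsPTSeparated x C) (hD : IsPTSeparated x D) :
    IsPTSeparated x (C ∪ D) := by
  obtain ⟨N₁, _, _, h₁⟩ := hC
  obtain ⟨N₂, _, _, h₂⟩ := hD
  refine ⟨N₁ ⊓ N₂, inferInstance, inferInstance, ?_⟩
  rintro c (hc | hc) hmem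
  · exact h₁ c hc (Subgroup.mem_inf.mp hmem).1
  · exact h₂ c hc (Subgroup.mem_inf.mp hmem).2

theorem IsPTSeparated.biUnion {ι : Type*} {s : Finset ι} {C : ι → Set G}
    (h : ∀ i ∈ s, IsPTSeparated x (C i)) : IsPTSeparated x (⋃ i ∈ s, C i) := by
  classical
  induction s using Finset.induction_on with
  | empty => simpa using isPTSeparated_empty x
  | insert i s _ ih =>
    rw [Finset.set_biUnion_insert]
    exact (h i (Finset.mem_insert_self i s)).union
      (ih fun j hj => h j (Finset.mem_insert_of_mem hj))

theorem isPTSeparated_of_map {H : Type*} [Group H] [Finite H] (f : G →* H)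
    (h : ∀ c ∈ C, f c ≠ f x) : IsPTSeparated x C := by
  refine ⟨f.ker, inferInstance, inferInstance, fun c hc hmem => h c hc ?_⟩
  rw [MonoidHom.mem_ker, map_mul, map_inv, inv_mul_eq_one] at hmem
  exact hmem.symm

theorem isPTSeparated_of_forall_not_modEq (f : G →* Multiplicative ℤ) {m : ℕ} (hm : m ≠ 0)
    (h : ∀ c ∈ C, ¬ (f c).toAdd ≡ (f x).toAdd [ZMOD m]) : IsPTSeparated x C := by
  have : NeZero m := ⟨hm⟩
  refine isPTSeparated_of_map ((Int.castAddHom (ZMod m)).toMultiplicative.comp f) fun c hc he => ?_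
  exact h c hc ((ZMod.intCast_eq_intCast_iff _ _ _).mp (congrArg Multiplicative.toAdd he))

theorem isPTSeparated_fiber (f : G →* Multiplicative ℤ) {n : ℤ} (h : (f x).toAdd ≠ n) :
    IsPTSeparated x {c | (f c).toAdd = n} := by
  refine isPTSeparated_of_forall_not_modEq f (m := (n - (f x).toAdd).natAbs + 1)
    (Nat.succ_ne_zero _) ?_
  rintro c rfl hmod
  have := Int.eq_zero_of_dvd_of_natAbs_lt_natAbs hmod.dvd (by rw [Int.natAbs_natCast]; omega)
  omega

theorem pow_factorial_index_mem (N : Subgroup G) [N.FiniteIndex] (g : G) :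
    g ^ N.index ! ∈ N :=
  N.pow_mem_of_index_ne_zero_of_dvd Subgroup.FiniteIndex.index_ne_zero g
    fun _ hm hle => Nat.dvd_factorial hm hle

theorem not_isPTClosed_of_pow_factorial_mem (g : G) (h1 : (1 : G) ∉ C)
    (h : ∀ n, g ^ n ! ∈ C) : ¬ IsPTClosed C := by
  intro hC
  obtain ⟨N, _, _, hN⟩ := isPTClosed_iff_forall_isPTSeparated.mp hC 1 h1
  exact hN _ (h N.index) (by simpa using pow_factorial_index_mem N g)

end Separation

namespace FreeGroup

variable {α : Type*} [DecidableEq α]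

def expSum (k : α) : FreeGroup α →* Multiplicative ℤ :=
  lift (Pi.mulSingle k (Multiplicative.ofAdd 1))

@[simp]
theorem expSum_of_self (k : α) : expSum k (of k) = Multiplicative.ofAdd 1 := by
  simp [expSum]

@[simp]
theorem expSum_of_of_ne {j k : α} (h : j ≠ k) : expSum k (of j) = 1 := by
  simp [expSum, h]

end FreeGroup

-- `repunitFour i = (4 ^ i - 1) / 3`, written `11…1` in base `4`.
def repunitFour (i : ℕ) : ℕ := ∑ k ∈ Finset.range i, 4 ^ k

theorem three_mul_repunitFour_add_one (L : ℕ) : 3 * repunitFour L + 1 = 4 ^ L := by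
  induction L with
  | zero => rfl
  | succ L ih => rw [repunitFour, Finset.sum_range_succ, ← repunitFour, pow_succ]; omega

theorem repunitFour_add (L d : ℕ) :
    repunitFour (L + d) = repunitFour L + 4 ^ L * repunitFour d := by
  simp only [repunitFour, Finset.sum_range_add, pow_add, Finset.mul_sum]

theorem repunitFour_modEq_of_le {L i : ℕ} (h : L ≤ i) :
    repunitFour i ≡ repunitFour L [MOD 4 ^ L] := by
  obtain ⟨d, rfl⟩ := Nat.exists_eq_add_of_le h
  rw [repunitFour_add]
  exact Nat.add_mul_mod_self_left _ _ _

theorem exists_forall_not_modEq_repunitFour (β : ℤ) :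
    ∃ L : ℕ, ∀ i, L ≤ i → ¬ (repunitFour i : ℤ) ≡ β [ZMOD (4 ^ L : ℕ)] := by
  refine ⟨(3 * β + 1).natAbs, fun i hi hmod => ?_⟩
  set L := (3 * β + 1).natAbs
  have hLβ : (repunitFour L : ℤ) ≡ β [ZMOD (4 ^ L : ℕ)] :=
    (Int.natCast_modEq_iff.mpr (repunitFour_modEq_of_le hi)).symm.trans hmod
  have hL : (3 * repunitFour L + 1 : ℤ) ≡ 3 * β + 1 [ZMOD (4 ^ L : ℕ)] :=
    (hLβ.mul_left 3).add_right 1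
  have hfour : (3 * repunitFour L + 1 : ℤ) = (4 ^ L : ℕ) := by
    exact_mod_cast three_mul_repunitFour_add_one L
  have hdvd : ((4 ^ L : ℕ) : ℤ) ∣ 3 * β + 1 := by
    rw [hfour] at hL
    exact Int.modEq_zero_iff_dvd.mp (hL.symm.trans (Int.modEq_zero_iff_dvd.mpr dvd_rfl))
  have := Int.eq_zero_of_dvd_of_natAbs_lt_natAbs hdvd
    (by rw [Int.natAbs_natCast]; exact Nat.lt_pow_self (by norm_num))
  omega

section FactorialRepunitSet

open FreeGroup

def factorialRepunitSet : Set (FreeGroup (Fin 2)) :=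
  {w | ∃ i, (expSum 0 w).toAdd = i ! ∧ (expSum 1 w).toAdd = repunitFour i}

theorem isPTClosed_factorialRepunitSet : IsPTClosed factorialRepunitSet := by
  rw [isPTClosed_iff_forall_isPTSeparated]
  intro x hx
  obtain ⟨L, hL⟩ := exists_forall_not_modEq_repunitFour (expSum 1 x).toAdd
  have hsplit : factorialRepunitSet ⊆
      (⋃ i ∈ Finset.range L, {w | (expSum 0 w).toAdd = i ! ∧ (expSum 1 w).toAdd = repunitFour i})
        ∪ {w | ∃ i, L ≤ i ∧ (expSum 1 w).toAdd = repunitFour i} := by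
    rintro w ⟨i, hi⟩
    by_cases hiL : i < L
    · exact Or.inl (Set.mem_biUnion (Finset.mem_range.mpr hiL) hi)
    · exact Or.inr ⟨i, not_lt.mp hiL, hi.2⟩
  refine (IsPTSeparated.union (IsPTSeparated.biUnion fun i _ => ?_) ?_).mono hsplit
  · by_cases ha : (expSum 0 x).toAdd = (i ! : ℕ)
    · have hb : (expSum 1 x).toAdd ≠ repunitFour i := fun hb => hx ⟨i, ha, hb⟩
      exact (isPTSeparated_fiber _ hb).mono fun w hw => hw.2
    · exact (isPTSeparated_fiber _ ha).mono fun w hw => hw.1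
  · refine isPTSeparated_of_forall_not_modEq (expSum 1) (pow_ne_zero L four_ne_zero) ?_
    rintro c ⟨i, hi, hc⟩
    rw [hc]
    exact hL i hi

theorem not_isPTClosed_factorialRepunitSet_mul_zpowers :
    ¬ IsPTClosed
        (factorialRepunitSet * (Subgroup.zpowers (of (1 : Fin 2)) : Set (FreeGroup (Fin 2)))) := by
  refine not_isPTClosed_of_pow_factorial_mem (of 0) ?_ fun n => ?_
  · rintro ⟨s, ⟨i, hi, -⟩, _, ⟨j, rfl⟩, h⟩
    have := congrArg (fun w => (expSum 0 w).toAdd) h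
    simp [hi, Nat.factorial_ne_zero] at this
  · refine ⟨of 0 ^ n ! * of 1 ^ repunitFour n, ⟨n, by simp, by simp⟩,
      of 1 ^ (-(repunitFour n : ℤ)), ⟨_, rfl⟩, ?_⟩
    simp [mul_assoc]

end FactorialRepunitSet

/-- Let `F = ⟨a,b⟩` be the free group of rank 2.  There is a subset `S` of `F`
closed in the profinite topology of `F` such that the product `S⟨b⟩` of `S` with
the cyclic subgroup generated by `b` is not closed in the profinite topology. -/
theorem exists_closed_set_with_product_with_cyclic_subgroup_not_closed :
    ∃ S : Set (FreeGroup (Fin 2)),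
      IsPTClosed S ∧
      ¬ IsPTClosed
          (S * (Subgroup.zpowers (FreeGroup.of (1 : Fin 2)) : Set (FreeGroup (Fin 2)))) :=
  ⟨factorialRepunitSet, isPTClosed_factorialRepunitSet,
    not_isPTClosed_factorialRepunitSet_mul_zpowers⟩
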